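/- The 2-form ω(x,y) = λ(e₀, x, y) on I = e₀^⊥ ∩ Im(𝕆) is nondegenerate, where e₀ is a unit pure imaginary octonion and λ(a,b,c) = ([a,b],c)/2. -/

import Mathlib

noncomputable section

/-- The octonions, realized via the Cayley–Dickson construction as pairs of quaternions. -/
abbrev Octo : Type := Quaternion ℝ × Quaternion ℝ

namespace Octo

/-- Octonion multiplication (Cayley–Dickson): `(a,b)(c,d) = (ac - d̄b, da + bc̄)`. -/
def omul (x y : Octo) : Octo :=
  (x.1 * y.1 - star y.2 * x.2, y.2 * x.1 + x.2 * star y.1)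

/-- The octonion unit. -/
def oone : Octo := (1, 0)

/-- Octonion conjugation. -/
def oconj (x : Octo) : Octo := (star x.1, -x.2)

/-- Real part of an octonion. -/
def ore (x : Octo) : ℝ := x.1.re

/-- The standard inner product `(x,y) = re (x * ȳ)`. -/
def oinner (x y : Octo) : ℝ := ore (omul x (oconj y))

/-- An octonion is pure imaginary if `x̄ = -x`. -/
def IsIm (x : Octo) : Prop := oconj x = -x

/-- The commutator `[a,b] = a*b - b*a`. -/
def comm (a b : Octo) : Octo := omul a b - omul b a

/-- The octonionic vector (cross) product on imaginary octonions: half the commutator. -/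
def cross (a b : Octo) : Octo := (1/2 : ℝ) • comm a b

/-- The 3-form `λ(a,b,c) = ([a,b],c)`. -/
def lam (a b c : Octo) : ℝ := oinner (comm a b) c

end Octo

/- The witness is `y = [e₀, x]`: it is imaginary and orthogonal to `e₀`, and
`ω(x, [e₀, x]) = |[e₀, x]|² / 2 = 2 (|e₀|² |x|² - (x, e₀)²) = 2 |x|² > 0`.
The identities involved are polynomial identities in the eight real coordinates. -/

namespace Octo

open Quaternion

theorem isIm_iff_re_eq_zero (x : Octo) : IsIm x ↔ x.1.re = 0 := by
  simp only [IsIm, oconj, Prod.ext_iff, Prod.fst_neg, Prod.snd_neg, and_true,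
    Quaternion.ext_iff, re_star, imI_star, imJ_star, imK_star, re_neg, imI_neg, imJ_neg, imK_neg,
    and_self]
  constructor <;> intro h <;> linarith

theorem oinner_self (x : Octo) : oinner x x = normSq x.1 + normSq x.2 := by
  simp only [oinner, ore, omul, oconj, star_neg, neg_mul, sub_neg_eq_add,
    self_mul_star, star_mul_self, re_add, re_coe]

theorem oinner_self_pos {x : Octo} (hx : x ≠ 0) : 0 < oinner x x := by
  rw [oinner_self]
  refine (add_nonneg normSq_nonneg normSq_nonneg).lt_of_ne fun h => hx ?_
  obtain ⟨h₁, h₂⟩ := (add_eq_zero_iff_of_nonneg normSq_nonneg normSq_nonneg).1 h.symm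
  exact Prod.ext (normSq_eq_zero.1 h₁) (normSq_eq_zero.1 h₂)

theorem comm_isIm (a b : Octo) : IsIm (comm a b) := by
  rw [isIm_iff_re_eq_zero]
  simp [comm, omul, re_mul]
  ring

theorem oinner_comm_left (a b : Octo) : oinner (comm a b) a = 0 := by
  simp [oinner, comm, omul, oconj, ore, re_mul, imI_mul, imJ_mul, imK_mul]
  ring

theorem oinner_comm_self {e x : Octo} (he : IsIm e) (hx : IsIm x) :
    oinner (comm e x) (comm e x) = 4 * (oinner e e * oinner x x - oinner x e ^ 2) := by
  rw [isIm_iff_re_eq_zero] at he hx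
  simp [oinner, comm, omul, oconj, ore, re_mul, imI_mul, imJ_mul, imK_mul, he, hx]
  ring

end Octo

open Octo in
/-- The 2-form `ω(x,y) = λ(e₀,x,y)`, with `λ(a,b,c) = ([a,b],c)/2`, is nondegenerate on
`I = e₀^⊥ ∩ Im 𝕆`. -/
theorem omega_nondegenerate (e₀ : Octo) (he : IsIm e₀) (hunit : oinner e₀ e₀ = 1)
    (x : Octo) (hx : IsIm x) (hxe : oinner x e₀ = 0) (hx0 : x ≠ 0) :
    ∃ y : Octo, IsIm y ∧ oinner y e₀ = 0 ∧ (1 / 2 : ℝ) * lam e₀ x y ≠ 0 := by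
  refine ⟨comm e₀ x, comm_isIm e₀ x, oinner_comm_left e₀ x, ?_⟩
  have hω : lam e₀ x (comm e₀ x) = 4 * oinner x x := by
    rw [lam, oinner_comm_self he hx, hunit, hxe]
    ring
  rw [hω]
  exact (mul_pos one_half_pos (mul_pos four_pos (oinner_self_pos hx0))).ne'

end
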